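/- arXiv:1805.11556 — 7 statements merged into one kernel-verified Lean document; each statement's English description precedes it below -/
import Mathlib

section
/- For n i.i.d. uniform random variables on [0,1], the probability that the first draw is at least k but is not the maximum of all n draws (a 'false positive') equals (n-1)/n - k + k^n/n. -/
open MeasureTheory Set

/-!
Condition on the first draw `x`: the event needs `k ≤ x` and one of the other `n - 1` draws
to exceed `x`, which happens with probability `1 - x ^ (n - 1)`. Integrating over `x ∈ [k, 1]`
gives `(1 - k) - (1 - k ^ n) / n`.
-/

lemma pi_setOf_exists_lt {ι : Type*} [Fintype ι] (μ : ι → Measure ℝ)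
    [∀ i, IsProbabilityMeasure (μ i)] (x : ℝ) :
    Measure.pi μ {y | ∃ j, x < y j} = 1 - ∏ j, μ j (Iic x) := by
  have : {y : ι → ℝ | ∃ j, x < y j} = (univ.pi fun _ => Iic x)ᶜ := by
    ext y; simp [Pi.le_def]
  rw [this, prob_compl_eq_one_sub (.univ_pi fun _ => measurableSet_Iic), Measure.pi_pi]

lemma pi_setOf_ge_and_exists_lt_zero (μ : Measure ℝ) [IsProbabilityMeasure μ] (m : ℕ)
    (k : ℝ) :
    Measure.pi (fun _ : Fin (m + 1) => μ) {a | k ≤ a 0 ∧ ∃ i, a 0 < a i}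
      = ∫⁻ x in Ici k, (1 - μ (Iic x) ^ m) ∂μ := by
  set E : Set (ℝ × (Fin m → ℝ)) := {p | k ≤ p.1 ∧ ∃ j, p.1 < p.2 j}
  have hE : MeasurableSet E := by measurability
  have hpre : {a : Fin (m + 1) → ℝ | k ≤ a 0 ∧ ∃ i, a 0 < a i}
      = MeasurableEquiv.piFinSuccAbove (fun _ => ℝ) 0 ⁻¹' E := by
    ext a
    refine and_congr_right fun _ => ⟨fun ⟨i, hi⟩ => ?_, fun ⟨j, hj⟩ => ⟨j.succ, hj⟩⟩
    rcases Fin.eq_zero_or_eq_succ i with rfl | ⟨j, rfl⟩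
    · exact absurd hi (lt_irrefl _)
    · exact ⟨j, hi⟩
  have hsection (x : ℝ) : Measure.pi (fun _ : Fin m => μ) (Prod.mk x ⁻¹' E)
      = (Ici k).indicator (fun x => 1 - μ (Iic x) ^ m) x := by
    by_cases hkx : k ≤ x
    · simp [E, hkx, pi_setOf_exists_lt]
    · simp [E, hkx]
  rw [hpre, (measurePreserving_piFinSuccAbove (fun _ => μ) 0).measure_preimage
      hE.nullMeasurableSet, Measure.prod_apply hE]
  simp_rw [hsection]
  exact lintegral_indicator measurableSet_Ici _

lemma volume_restrict_Icc_zero_one_Iic {x : ℝ} (hx : x ≤ 1) :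
    (volume.restrict (Icc (0 : ℝ) 1)) (Iic x) = ENNReal.ofReal x := by
  have : Iic x ∩ Icc 0 1 = Icc 0 x := by ext t; simp only [mem_inter_iff, mem_Iic, mem_Icc]; grind
  rw [Measure.restrict_apply measurableSet_Iic, this, Real.volume_Icc, sub_zero]

lemma integral_one_sub_pow (k : ℝ) (m : ℕ) :
    ∫ x in k..1, (1 - x ^ m) = 1 - k - (1 - k ^ (m + 1)) / (m + 1) := by
  rw [intervalIntegral.integral_sub intervalIntegrable_const
    (intervalIntegral.intervalIntegrable_pow m), intervalIntegral.integral_const, integral_pow]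
  simp

lemma setLIntegral_Ici_one_sub_volume_Iic_pow {k : ℝ} (hk : k ∈ Icc (0 : ℝ) 1) (m : ℕ) :
    ∫⁻ x in Ici k, (1 - (volume.restrict (Icc (0 : ℝ) 1)) (Iic x) ^ m)
        ∂(volume.restrict (Icc 0 1))
      = ENNReal.ofReal (1 - k - (1 - k ^ (m + 1)) / (m + 1)) := by
  have hIcc : Ici k ∩ Icc 0 1 = Icc k 1 := by
    ext t; simp only [mem_inter_iff, mem_Ici, mem_Icc]; grind
  have hnonneg : ∀ x ∈ Icc k 1, 0 ≤ 1 - x ^ m := fun x hx =>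
    sub_nonneg.2 (pow_le_one₀ (hk.1.trans hx.1) hx.2)
  rw [Measure.restrict_restrict measurableSet_Ici, hIcc, ← integral_one_sub_pow,
    intervalIntegral.integral_of_le hk.2, ← integral_Icc_eq_integral_Ioc,
    ofReal_integral_eq_lintegral_ofReal
      (by fun_prop : Continuous fun x : ℝ => 1 - x ^ m).integrableOn_Icc
      ((ae_restrict_iff' measurableSet_Icc).2 (.of_forall hnonneg))]
  refine setLIntegral_congr_fun measurableSet_Icc fun x hx => ?_
  have hx0 : 0 ≤ x := hk.1.trans hx.1
  rw [volume_restrict_Icc_zero_one_Iic hx.2, ENNReal.ofReal_sub _ (pow_nonneg hx0 m),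
    ENNReal.ofReal_pow hx0, ENNReal.ofReal_one]

/-- For `n` i.i.d. uniform random variables on `[0,1]`, the probability that the first draw
is at least `k` but is not the maximum of all `n` draws (a false positive), i.e. some other
draw strictly exceeds it, equals `(n-1)/n - k + k^n/n`. -/
theorem false_positive_round_one_prob (n : ℕ) (hn : 0 < n) (k : ℝ)
    (hk : k ∈ Set.Icc (0 : ℝ) 1) :
    (Measure.pi fun _ : Fin n => (volume : Measure ℝ).restrict (Set.Icc 0 1))
      {a | k ≤ a ⟨0, hn⟩ ∧ ∃ i, a ⟨0, hn⟩ < a i}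
      = ENNReal.ofReal (((n : ℝ) - 1) / n - k + k ^ n / n) := by
  obtain ⟨m, rfl⟩ := Nat.exists_eq_add_one_of_ne_zero hn.ne'
  have : IsProbabilityMeasure ((volume : Measure ℝ).restrict (Icc 0 1)) :=
    ⟨by simp [Real.volume_Icc]⟩
  rw [show (⟨0, hn⟩ : Fin (m + 1)) = 0 from rfl, pi_setOf_ge_and_exists_lt_zero,
    setLIntegral_Ici_one_sub_volume_Iic_pow hk]
  congr 1
  push_cast
  field_simp
  ring
end

section
/- For three i.i.d. uniform random variables a_1, a_2, a_3 on [0,1] and nonincreasing decision numbers 1 ≥ k_1 ≥ k_2 ≥ 0, the probability of the event {a_1 < k_1, a_1 not the maximum, a_2 < k_2, a_2 not the maximum} equals k_1·k_2 - k_1^2·k_2/2 - k_2^3/6. -/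
/-!
Condition on the last draw `a 2 = x`. Since `a 1 < a 2` forces `max (a 1) (a 2) = a 2`, the
event is `{a 0 < min k₁ x, a 1 < min k₂ x}`, of conditional probability `min k₁ x * min k₂ x`.
Integrating this over `[0, 1]`, split at `k₂ ≤ k₁`, gives
`k₂³/3 + k₂ (k₁² - k₂²)/2 + k₁ k₂ (1 - k₁)`.
-/

open MeasureTheory Set

theorem volume_restrict_Icc_zero_one_Iio {t : ℝ} (ht : t ≤ 1) :
    volume.restrict (Icc (0 : ℝ) 1) (Iio t) = ENNReal.ofReal t := by
  have hinter : Iio t ∩ Icc (0 : ℝ) 1 = Ico 0 t := by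
    ext x
    simp only [mem_inter_iff, mem_Iio, mem_Icc, mem_Ico]
    constructor
    · rintro ⟨hxt, hx0, -⟩
      exact ⟨hx0, hxt⟩
    · rintro ⟨hx0, hxt⟩
      exact ⟨hxt, hx0, by linarith⟩
  rw [Measure.restrict_apply measurableSet_Iio, hinter, Real.volume_Ico, sub_zero]

theorem pi_fin_three_setOf_lt_lt (μ : Measure ℝ) [SigmaFinite μ] {f g : ℝ → ℝ}
    (hf : Measurable f) (hg : Measurable g) :
    Measure.pi (fun _ : Fin 3 => μ) {a | a 0 < f (a 2) ∧ a 1 < g (a 2)}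
      = ∫⁻ x, μ (Iio (f x)) * μ (Iio (g x)) ∂μ := by
  set T : Set (ℝ × (Fin 2 → ℝ)) := {p | p.2 0 < f p.1 ∧ p.2 1 < g p.1}
  have hT : MeasurableSet T :=
    (measurableSet_lt (by fun_prop) (hf.comp measurable_fst)).inter
      (measurableSet_lt (by fun_prop) (hg.comp measurable_fst))
  have hslice (x : ℝ) : Prod.mk x ⁻¹' T = univ.pi ![Iio (f x), Iio (g x)] := by
    ext b
    simp [T, Fin.forall_fin_two]
  calc Measure.pi (fun _ : Fin 3 => μ) {a | a 0 < f (a 2) ∧ a 1 < g (a 2)}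
      = (μ.prod (Measure.pi fun _ : Fin 2 => μ)) T :=
        (measurePreserving_piFinSuccAbove (fun _ : Fin 3 => μ) 2).measure_preimage_equiv T
    _ = ∫⁻ x, μ (Iio (f x)) * μ (Iio (g x)) ∂μ := by
        simp only [Measure.prod_apply hT, hslice, Measure.pi_pi, Fin.prod_univ_two,
          Matrix.cons_val_zero, Matrix.cons_val_one]

theorem integral_min_mul_min {k₁ k₂ : ℝ} (h0 : 0 ≤ k₂) (h21 : k₂ ≤ k₁) (h1 : k₁ ≤ 1) :
    ∫ x in (0 : ℝ)..1, min k₁ x * min k₂ x = k₁ * k₂ - k₁ ^ 2 * k₂ / 2 - k₂ ^ 3 / 6 := by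
  have hint (a b : ℝ) : IntervalIntegrable (fun x => min k₁ x * min k₂ x) volume a b :=
    (by fun_prop : Continuous fun x : ℝ => min k₁ x * min k₂ x).intervalIntegrable a b
  have below : ∫ x in (0 : ℝ)..k₂, min k₁ x * min k₂ x = ∫ x in (0 : ℝ)..k₂, x ^ 2 := by
    refine intervalIntegral.integral_congr fun x hx => ?_
    rw [uIcc_of_le h0] at hx
    simp only [min_eq_right (hx.2.trans h21), min_eq_right hx.2, sq]
  have between : ∫ x in k₂..k₁, min k₁ x * min k₂ x = ∫ x in k₂..k₁, k₂ * x := by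
    refine intervalIntegral.integral_congr fun x hx => ?_
    rw [uIcc_of_le h21] at hx
    simp only [min_eq_right hx.2, min_eq_left hx.1, mul_comm]
  have above : ∫ x in k₁..1, min k₁ x * min k₂ x = ∫ _ in k₁..(1 : ℝ), k₁ * k₂ := by
    refine intervalIntegral.integral_congr fun x hx => ?_
    rw [uIcc_of_le h1] at hx
    simp only [min_eq_left hx.1, min_eq_left (h21.trans hx.1)]
  rw [← intervalIntegral.integral_add_adjacent_intervals (hint 0 k₁) (hint k₁ 1),
    ← intervalIntegral.integral_add_adjacent_intervals (hint 0 k₂) (hint k₂ k₁),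
    below, between, above, integral_pow, intervalIntegral.integral_const_mul, integral_id,
    intervalIntegral.integral_const, smul_eq_mul]
  ring

/-- For three i.i.d. uniform draws on `[0,1]` and nonincreasing decision numbers
`1 ≥ k₁ ≥ k₂ ≥ 0`, the probability that the game continues past round 2, i.e.
`a₁ < k₁`, `a₁ < max(a₂,a₃)`, `a₂ < k₂` and `a₂ < a₃`, equals
`k₁k₂ - k₁²k₂/2 - k₂³/6`. -/
theorem n_three_continuation_past_round_two (k₁ k₂ : ℝ) (h0 : 0 ≤ k₂) (h21 : k₂ ≤ k₁)
    (h1 : k₁ ≤ 1) :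
    (Measure.pi fun _ : Fin 3 => (volume : Measure ℝ).restrict (Set.Icc 0 1))
      {a | a 0 < k₁ ∧ a 0 < max (a 1) (a 2) ∧ a 1 < k₂ ∧ a 1 < a 2}
      = ENNReal.ofReal (k₁ * k₂ - k₁ ^ 2 * k₂ / 2 - k₂ ^ 3 / 6) := by
  have hevent : {a : Fin 3 → ℝ | a 0 < k₁ ∧ a 0 < max (a 1) (a 2) ∧ a 1 < k₂ ∧ a 1 < a 2}
      = {a | a 0 < min k₁ (a 2) ∧ a 1 < min k₂ (a 2)} := by
    ext a
    simp only [mem_ofPred_eq, lt_min_iff]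
    constructor
    · rintro ⟨h₀k, h₀max, h₁k, h₁₂⟩
      exact ⟨⟨h₀k, max_eq_right h₁₂.le ▸ h₀max⟩, h₁k, h₁₂⟩
    · rintro ⟨⟨h₀k, h₀₂⟩, h₁k, h₁₂⟩
      exact ⟨h₀k, h₀₂.trans_le (le_max_right _ _), h₁k, h₁₂⟩
  have hnonneg : ∀ x ∈ Icc (0 : ℝ) 1, 0 ≤ min k₁ x * min k₂ x := fun x hx =>
    mul_nonneg (le_min (h0.trans h21) hx.1) (le_min h0 hx.1)
  rw [hevent, pi_fin_three_setOf_lt_lt _ (by fun_prop) (by fun_prop),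
    ← integral_min_mul_min h0 h21 h1, intervalIntegral.integral_of_le zero_le_one,
    ← integral_Icc_eq_integral_Ioc, ofReal_integral_eq_lintegral_ofReal
      (Continuous.integrableOn_Icc (by fun_prop))
      (ae_restrict_of_forall_mem measurableSet_Icc hnonneg)]
  refine setLIntegral_congr_fun measurableSet_Icc fun x hx => ?_
  rw [volume_restrict_Icc_zero_one_Iio (min_le_of_left_le h1),
    volume_restrict_Icc_zero_one_Iio (min_le_of_left_le (h21.trans h1)),
    ← ENNReal.ofReal_mul (le_min (h0.trans h21) hx.1)]
end

section
/- The function f(k_1, k_2) = 1/3 + k_1/2 - k_1^3/2 + k_1·k_2 - k_1^2·k_2/2 - k_2^3/2 on the region 0 ≤ k_2 ≤ k_1 ≤ 1 attains a maximum value strictly greater than 0.679, and at any interior critical point the optimal k_2 satisfies k_2^2 = (2k_1 - k_1^2)/3, so in particular the optimal k_2 is strictly greater than 1/2 when k_1 ∈ (1/2, 1). -/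
/-- The exact `n = 3` win probability `f(k₁,k₂) = 1/3 + k₁/2 - k₁³/2 + k₁k₂ - k₁²k₂/2 - k₂³/2`
on the region `0 ≤ k₂ ≤ k₁ ≤ 1` attains a maximum value strictly greater than `0.679`; at any
interior critical point the optimal `k₂` satisfies `k₂² = (2k₁ - k₁²)/3`, so in particular the
optimal `k₂` is strictly greater than `1/2` when `k₁ ∈ (1/2, 1)`. -/
theorem n_three_win_prob_optimum :
    (∃ p : ℝ × ℝ, p ∈ {q : ℝ × ℝ | 0 ≤ q.2 ∧ q.2 ≤ q.1 ∧ q.1 ≤ 1} ∧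
      IsMaxOn (fun q : ℝ × ℝ =>
          1 / 3 + q.1 / 2 - q.1 ^ 3 / 2 + q.1 * q.2 - q.1 ^ 2 * q.2 / 2 - q.2 ^ 3 / 2)
        {q : ℝ × ℝ | 0 ≤ q.2 ∧ q.2 ≤ q.1 ∧ q.1 ≤ 1} p ∧
      (0.679 : ℝ) <
        1 / 3 + p.1 / 2 - p.1 ^ 3 / 2 + p.1 * p.2 - p.1 ^ 2 * p.2 / 2 - p.2 ^ 3 / 2)
    ∧ (∀ k₁ k₂ : ℝ, 0 < k₂ → k₂ < k₁ → k₁ < 1 →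
        (1 / 2 - 3 * k₁ ^ 2 / 2 + k₂ - k₁ * k₂ = 0) →
        (k₁ - k₁ ^ 2 / 2 - 3 * k₂ ^ 2 / 2 = 0) →
        k₂ ^ 2 = (2 * k₁ - k₁ ^ 2) / 3 ∧ (1 / 2 < k₁ → 1 / 2 < k₂)) := by
  constructor
  · set S : Set (ℝ × ℝ) := {q : ℝ × ℝ | 0 ≤ q.2 ∧ q.2 ≤ q.1 ∧ q.1 ≤ 1} with hS
    have hsub : S ⊆ Set.Icc ((0 : ℝ), (0 : ℝ)) (1, 1) := by
      rintro ⟨x, y⟩ ⟨h1, h2, h3⟩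
      exact ⟨⟨le_trans h1 h2, h1⟩, ⟨h3, le_trans h2 h3⟩⟩
    have hclosed : IsClosed S := by
      have h1 : IsClosed {q : ℝ × ℝ | 0 ≤ q.2} :=
        isClosed_le continuous_const continuous_snd
      have h2 : IsClosed {q : ℝ × ℝ | q.2 ≤ q.1} :=
        isClosed_le continuous_snd continuous_fst
      have h3 : IsClosed {q : ℝ × ℝ | q.1 ≤ 1} :=
        isClosed_le continuous_fst continuous_const
      exact (h1.inter (h2.inter h3))
    have hcomp : IsCompact S := (isCompact_Icc).of_isClosed_subset hclosed hsub
    have hne : S.Nonempty := ⟨(0, 0), by simp [hS]⟩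
    have hcont : ContinuousOn (fun q : ℝ × ℝ =>
        1 / 3 + q.1 / 2 - q.1 ^ 3 / 2 + q.1 * q.2 - q.1 ^ 2 * q.2 / 2 - q.2 ^ 3 / 2) S := by
      fun_prop
    obtain ⟨p, hpS, hpmax⟩ := hcomp.exists_isMaxOn hne hcont
    refine ⟨p, hpS, hpmax, ?_⟩
    have hmem : ((0.69 : ℝ), (0.56 : ℝ)) ∈ S := by
      constructor <;> norm_num
    have := hpmax hmem
    simp only [Set.mem_setOf_eq] at this ⊢
    calc (0.679 : ℝ) < 1 / 3 + 0.69 / 2 - (0.69:ℝ) ^ 3 / 2 + 0.69 * 0.56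
          - (0.69:ℝ) ^ 2 * 0.56 / 2 - (0.56:ℝ) ^ 3 / 2 := by norm_num
      _ ≤ _ := this
  · intro k₁ k₂ h0 h1 h2 e1 e2
    refine ⟨by linarith, fun hk : 1 / 2 < k₁ => ?_⟩
    nlinarith [sq_nonneg (k₁ - 1), sq_nonneg (k₂ - 1/2), sq_nonneg (k₂ + 1/2)]
end

section
/- Substituting the Gilbert–Mosteller values k_1 = k, where k satisfies the indifference equation, and k_2 = 1/2 into the exact n = 3 win probability f(k_1, k_2) = 1/3 + k_1/2 - k_1^3/2 + k_1·k_2 - k_1^2·k_2/2 - k_2^3/2 yields a value strictly less than the maximum of f over 0 ≤ k_2 ≤ k_1 ≤ 1; in particular f(k_1, 1/2) < f at the optimizer for every k_1 ∈ [0,1]. -/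
/-- Substituting the Gilbert–Mosteller choice `k₂ = 1/2` into the exact `n = 3` win
probability `f(k₁,k₂) = 1/3 + k₁/2 - k₁³/2 + k₁k₂ - k₁²k₂/2 - k₂³/2` yields a value strictly
less than the maximum of `f` over `0 ≤ k₂ ≤ k₁ ≤ 1`: there is a maximizer `p` of `f` over
that region with `f(k₁, 1/2) < f(p)` for every `k₁ ∈ [0,1]`. -/
theorem gm_half_suboptimal_n_three :
    ∃ p : ℝ × ℝ, p ∈ {q : ℝ × ℝ | 0 ≤ q.2 ∧ q.2 ≤ q.1 ∧ q.1 ≤ 1} ∧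
      IsMaxOn (fun q : ℝ × ℝ =>
          1 / 3 + q.1 / 2 - q.1 ^ 3 / 2 + q.1 * q.2 - q.1 ^ 2 * q.2 / 2 - q.2 ^ 3 / 2)
        {q : ℝ × ℝ | 0 ≤ q.2 ∧ q.2 ≤ q.1 ∧ q.1 ≤ 1} p ∧
      ∀ k₁ ∈ Set.Icc (0 : ℝ) 1,
        1 / 3 + k₁ / 2 - k₁ ^ 3 / 2 + k₁ * (1 / 2) - k₁ ^ 2 * (1 / 2) / 2 - (1 / 2 : ℝ) ^ 3 / 2
          < 1 / 3 + p.1 / 2 - p.1 ^ 3 / 2 + p.1 * p.2 - p.1 ^ 2 * p.2 / 2 - p.2 ^ 3 / 2 := by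
  set S : Set (ℝ × ℝ) := {q : ℝ × ℝ | 0 ≤ q.2 ∧ q.2 ≤ q.1 ∧ q.1 ≤ 1} with hS
  set f : ℝ × ℝ → ℝ := fun q =>
    1 / 3 + q.1 / 2 - q.1 ^ 3 / 2 + q.1 * q.2 - q.1 ^ 2 * q.2 / 2 - q.2 ^ 3 / 2 with hf
  have hclosed : IsClosed S := by
    have h1 : IsClosed {q : ℝ × ℝ | 0 ≤ q.2} :=
      isClosed_le continuous_const continuous_snd
    have h2 : IsClosed {q : ℝ × ℝ | q.2 ≤ q.1} :=
      isClosed_le continuous_snd continuous_fst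
    have h3 : IsClosed {q : ℝ × ℝ | q.1 ≤ 1} :=
      isClosed_le continuous_fst continuous_const
    have : S = {q : ℝ × ℝ | 0 ≤ q.2} ∩ ({q : ℝ × ℝ | q.2 ≤ q.1} ∩ {q : ℝ × ℝ | q.1 ≤ 1}) := by
      ext q; simp [hS, Set.mem_setOf_eq, and_assoc]
    rw [this]
    exact h1.inter (h2.inter h3)
  have hsub : S ⊆ Set.Icc (0 : ℝ) 1 ×ˢ Set.Icc (0 : ℝ) 1 := by
    rintro ⟨a, b⟩ ⟨h0, hba, ha1⟩
    exact ⟨⟨le_trans h0 hba, ha1⟩, ⟨h0, le_trans hba ha1⟩⟩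
  have hcompact : IsCompact S :=
    (isCompact_Icc.prod isCompact_Icc).of_isClosed_subset hclosed hsub
  have hne : S.Nonempty := ⟨(0, 0), by norm_num [hS]⟩
  have hcont : ContinuousOn f S := by fun_prop
  obtain ⟨p, hpS, hpmax⟩ := hcompact.exists_isMaxOn hne hcont
  refine ⟨p, hpS, hpmax, ?_⟩
  intro k₁ ⟨hk0, hk1⟩
  have hq : ((67 : ℝ) / 100, (27 : ℝ) / 50) ∈ S := by norm_num [hS]
  have hle := hpmax hq
  simp only [hf, Set.mem_setOf_eq] at hle
  have h1 : 1 / 3 + k₁ / 2 - k₁ ^ 3 / 2 + k₁ * (1 / 2) - k₁ ^ 2 * (1 / 2) / 2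
      - (1 / 2 : ℝ) ^ 3 / 2 ≤ 293 / 432 := by
    nlinarith [sq_nonneg (k₁ - 2 / 3), mul_nonneg (sq_nonneg (k₁ - 2 / 3)) hk0]
  have h2 : (293 : ℝ) / 432 <
      1 / 3 + p.1 / 2 - p.1 ^ 3 / 2 + p.1 * p.2 - p.1 ^ 2 * p.2 / 2 - p.2 ^ 3 / 2 := by
    refine lt_of_lt_of_le ?_ hle
    norm_num
  linarith
end

section
/- For the identical-decision-number strategy on n draws (decision number k ∈ [0,1] for rounds 1 through n-1, and 0 for round n), the probability of winning at round r (for 1 ≤ r ≤ n-1) equals k^{r-1}/(n-r+1) - k^n/(n-r+1), and the probability of winning at round n equals k^{n-1} - (n-1)·k^n/n. -/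
/-!
Fubini over the accepted coordinate: fixing the accepted draw `a_i = x`, the other draws are
independent uniforms and the winning event becomes a box. Before the last round, winning at
round `i + 1` forces `x ≥ k`, the earlier draws into `[0, k)` and the later ones into `[0, x]`,
so its probability is `∫_k^1 k^i x^(n-1-i) dx`. At the last round every earlier draw lies below
`min k x`, giving `∫_0^1 (min k x)^(n-1) dx`.
-/

open MeasureTheory Set

theorem Fin.prod_ite_val_lt {M : Type*} [CommMonoid M] {N t : ℕ} (ht : t ≤ N) (a b : M) :
    (∏ j : Fin N, if (j : ℕ) < t then a else b) = a ^ t * b ^ (N - t) := by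
  rw [Fin.prod_univ_eq_prod_range (fun j => if j < t then a else b),
    ← Finset.prod_range_mul_prod_Ico _ ht,
    Finset.prod_congr rfl fun j hj => if_pos (Finset.mem_range.1 hj),
    Finset.prod_congr rfl fun j hj => if_neg (Finset.mem_Ico.1 hj).1.not_gt]
  simp

theorem MeasureTheory.Measure.pi_fin_succ_apply_eq_lintegral_insertNth {α : Type*}
    [MeasurableSpace α] (μ : Measure α) [SigmaFinite μ] {N : ℕ} (i : Fin (N + 1))
    {A : Set (Fin (N + 1) → α)} (hA : MeasurableSet A) :
    Measure.pi (fun _ => μ) A =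
      ∫⁻ x, Measure.pi (fun _ : Fin N => μ) {y | i.insertNth x y ∈ A} ∂μ := by
  have hmp := (measurePreserving_piFinSuccAbove (fun _ => μ) i).symm
  rw [← hmp.measure_preimage hA.nullMeasurableSet,
    Measure.prod_apply ((MeasurableEquiv.piFinSuccAbove (fun _ => α) i).symm.measurable hA)]
  rfl

theorem lintegral_Icc_ofReal_eq_intervalIntegral {f : ℝ → ℝ} (hf : Continuous f) {a b : ℝ}
    (hab : a ≤ b) (hf0 : ∀ x ∈ Icc a b, 0 ≤ f x) :
    ∫⁻ x in Icc a b, ENNReal.ofReal (f x) = ENNReal.ofReal (∫ x in a..b, f x) := by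
  rw [intervalIntegral.integral_of_le hab, ← integral_Icc_eq_integral_Ioc,
    ofReal_integral_eq_lintegral_ofReal hf.integrableOn_Icc
      ((ae_restrict_iff' measurableSet_Icc).2 (ae_of_all _ hf0))]

theorem integral_min_pow {N : ℕ} {k : ℝ} (hk0 : 0 ≤ k) (hk1 : k ≤ 1) :
    ∫ x in (0 : ℝ)..1, min k x ^ N = k ^ N - N * k ^ (N + 1) / (N + 1) := by
  have hcont : Continuous fun x : ℝ => min k x ^ N := by fun_prop
  have below : ∫ x in (0 : ℝ)..k, min k x ^ N = ∫ x in (0 : ℝ)..k, x ^ N :=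
    intervalIntegral.integral_congr fun x hx => by
      rw [uIcc_of_le hk0] at hx; simp only [min_eq_right hx.2]
  have above : ∫ x in k..(1 : ℝ), min k x ^ N = ∫ _ in k..(1 : ℝ), k ^ N :=
    intervalIntegral.integral_congr fun x hx => by
      rw [uIcc_of_le hk1] at hx; simp only [min_eq_left hx.1]
  rw [← intervalIntegral.integral_add_adjacent_intervals (b := k)
      (hcont.intervalIntegrable 0 k) (hcont.intervalIntegrable k 1), below, above,
    integral_pow, intervalIntegral.integral_const, smul_eq_mul]
  field_simp
  ring

local notation "μ₁" => volume.restrict (Icc (0 : ℝ) 1)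

theorem volume_restrict_Icc_zero_one_Iic_s10 {c : ℝ} (hc : c ≤ 1) :
    μ₁ (Iic c) = ENNReal.ofReal c := by
  rw [Measure.restrict_apply measurableSet_Iic, ← Ici_inter_Iic, inter_comm, inter_assoc,
    Iic_inter_Iic, min_eq_right hc, Ici_inter_Iic, Real.volume_Icc, sub_zero]

theorem volume_restrict_Icc_zero_one_Iio_s10 {c : ℝ} (hc : c ≤ 1) :
    μ₁ (Iio c) = ENNReal.ofReal c := by
  rw [measure_congr Iio_ae_eq_Iic, volume_restrict_Icc_zero_one_Iic_s10 hc]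

-- Rounds are 0-indexed: `winAt k i` is winning at round `i + 1` with threshold `k`.
def winAt (k : ℝ) {n : ℕ} (i : Fin n) : Set (Fin n → ℝ) :=
  {a | (∀ j, j < i → a j < k) ∧ k ≤ a i ∧ ∀ j, a j ≤ a i}

-- That the last draw is the overall maximum is implied by all earlier ones lying below it.
def winAtLast (k : ℝ) (N : ℕ) : Set (Fin (N + 1) → ℝ) :=
  {a | ∀ j, j < Fin.last N → a j < k ∧ a j < a (Fin.last N)}

-- An earlier draw below `k ≤ a i` is never the overall maximum.
theorem winAt_eq {n : ℕ} (k : ℝ) (i : Fin n) :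
    winAt k i = {a | (∀ j : Fin n, (j : ℕ) < i → a j < k ∧ ∃ l, a j < a l) ∧
      k ≤ a i ∧ ∀ l, a l ≤ a i} := by
  ext a
  simp only [winAt, mem_ofPred_eq, Fin.lt_def]
  exact ⟨fun ⟨hbefore, hk, hmax⟩ =>
      ⟨fun j hj => ⟨hbefore j hj, i, (hbefore j hj).trans_le hk⟩, hk, hmax⟩,
    fun ⟨hbefore, hk, hmax⟩ => ⟨fun j hj => (hbefore j hj).1, hk, hmax⟩⟩

theorem winAtLast_eq (k : ℝ) (N : ℕ) :
    winAtLast k N = {a | (∀ j : Fin (N + 1), (j : ℕ) < N → a j < k ∧ ∃ l, a j < a l) ∧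
      ∀ l, a l ≤ a (Fin.last N)} := by
  ext a
  simp only [winAtLast, mem_ofPred_eq, Fin.lt_def, Fin.val_last]
  refine ⟨fun h => ⟨fun j hj => ⟨(h j hj).1, _, (h j hj).2⟩, fun l => ?_⟩,
    fun ⟨hbefore, hmax⟩ j hj =>
      ⟨(hbefore j hj).1, (hbefore j hj).2.elim fun l hl => hl.trans_le (hmax l)⟩⟩
  by_cases hl : (l : ℕ) < N
  · exact (h l hl).2.le
  · rw [show l = Fin.last N from Fin.ext (by rw [Fin.val_last]; omega)]

section
variable {N : ℕ} {k : ℝ}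

theorem insertNth_mem_winAt_iff (i : Fin (N + 1)) {x : ℝ} (hkx : k ≤ x) (y : Fin N → ℝ) :
    i.insertNth x y ∈ winAt k i ↔
      y ∈ univ.pi fun j : Fin N => if (j : ℕ) < i then Iio k else Iic x := by
  have hlt : ∀ j : Fin N, i.succAbove j < i ↔ (j : ℕ) < i := fun j => by
    rw [Fin.succAbove_lt_iff_castSucc_lt, Fin.lt_def, Fin.val_castSucc]
  simp only [winAt, mem_ofPred_eq, i.forall_iff_succAbove, Fin.insertNth_apply_same,
    Fin.insertNth_apply_succAbove, mem_pi, mem_univ, true_implies, lt_irrefl, false_implies,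
    le_refl, hkx, true_and, hlt]
  constructor
  · rintro ⟨hbefore, hmax⟩ j
    split_ifs with hj
    exacts [hbefore j hj, hmax j]
  · intro h
    refine ⟨fun j hj => by simpa [hj] using h j, fun j => ?_⟩
    have := h j
    split_ifs at this with hj
    exacts [this.le.trans hkx, this]

theorem measure_winAt (hk0 : 0 ≤ k) (hk1 : k ≤ 1) (i : Fin (N + 1)) :
    Measure.pi (fun _ => μ₁) (winAt k i)
      = ENNReal.ofReal ((k ^ (i : ℕ) - k ^ (N + 1)) / (N + 1 - i)) := by
  have hi : (i : ℕ) ≤ N := Nat.lt_succ_iff.1 i.is_lt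
  have hslice : ∀ x ∈ Icc (0 : ℝ) 1,
      Measure.pi (fun _ : Fin N => μ₁) {y | i.insertNth x y ∈ winAt k i}
        = (Icc k 1).indicator (fun x => ENNReal.ofReal (k ^ (i : ℕ) * x ^ (N - i))) x := by
    intro x hx
    by_cases hkx : k ≤ x
    · rw [indicator_of_mem (show x ∈ Icc k 1 from ⟨hkx, hx.2⟩)]
      simp only [insertNth_mem_winAt_iff i hkx, ofPred_mem_eq, Measure.pi_pi, apply_ite μ₁,
        volume_restrict_Icc_zero_one_Iio_s10 hk1, volume_restrict_Icc_zero_one_Iic_s10 hx.2]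
      rw [Fin.prod_ite_val_lt hi, ← ENNReal.ofReal_pow hk0, ← ENNReal.ofReal_pow hx.1,
        ← ENNReal.ofReal_mul (by positivity)]
    · rw [indicator_of_notMem fun h => hkx h.1]
      have hempty : {y : Fin N → ℝ | i.insertNth x y ∈ winAt k i} = ∅ :=
        eq_empty_of_forall_notMem fun y hy => hkx (by simpa using hy.2.1)
      rw [hempty, measure_empty]
  rw [Measure.pi_fin_succ_apply_eq_lintegral_insertNth _ i (by unfold winAt; measurability),
    setLIntegral_congr_fun measurableSet_Icc hslice, lintegral_indicator measurableSet_Icc,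
    Measure.restrict_restrict measurableSet_Icc, Icc_inter_Icc, max_eq_left hk0, min_self,
    lintegral_Icc_ofReal_eq_intervalIntegral (by fun_prop) hk1
      fun x hx => by have := hk0.trans hx.1; positivity,
    intervalIntegral.integral_const_mul, integral_pow, one_pow]
  have hpow : k ^ (i : ℕ) * k ^ (N - i + 1) = k ^ (N + 1) := by rw [← pow_add]; congr 1; omega
  congr 1
  rw [Nat.cast_sub hi, ← hpow]
  ring

theorem insertNth_last_mem_winAtLast_iff (x : ℝ) (y : Fin N → ℝ) :
    (Fin.last N).insertNth x y ∈ winAtLast k N ↔ y ∈ univ.pi fun _ => Iio (min k x) := by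
  simp only [winAtLast, mem_ofPred_eq, Fin.forall_fin_succ', Fin.insertNth_last', Fin.snoc_last,
    Fin.snoc_castSucc, lt_irrefl, false_implies, and_true, Fin.castSucc_lt_last, true_implies,
    mem_pi, mem_univ, mem_Iio, lt_min_iff]

theorem measure_winAtLast (hk0 : 0 ≤ k) (hk1 : k ≤ 1) :
    Measure.pi (fun _ => μ₁) (winAtLast k N)
      = ENNReal.ofReal (k ^ N - N * k ^ (N + 1) / (N + 1)) := by
  have hslice : ∀ x ∈ Icc (0 : ℝ) 1,
      Measure.pi (fun _ : Fin N => μ₁) {y | (Fin.last N).insertNth x y ∈ winAtLast k N}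
        = ENNReal.ofReal (min k x ^ N) := by
    intro x hx
    have hm : 0 ≤ min k x := le_min hk0 hx.1
    simp only [insertNth_last_mem_winAtLast_iff, ofPred_mem_eq, Measure.pi_pi,
      volume_restrict_Icc_zero_one_Iio_s10 ((min_le_left _ _).trans hk1), Finset.prod_const,
      Finset.card_univ, Fintype.card_fin, ENNReal.ofReal_pow hm]
  rw [Measure.pi_fin_succ_apply_eq_lintegral_insertNth _ (Fin.last N)
      (by unfold winAtLast; measurability),
    setLIntegral_congr_fun measurableSet_Icc hslice,
    lintegral_Icc_ofReal_eq_intervalIntegral (by fun_prop) zero_le_one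
      fun x hx => by have := le_min hk0 hx.1; positivity,
    integral_min_pow hk0 hk1]
end

/-- Identical-decision-number strategy on `n` draws (decision number `k` for rounds
`1,…,n-1`, decision number `0` at round `n`): the probability of winning at round `r`
(`1 ≤ r ≤ n-1`), i.e. of continuing past rounds `1,…,r-1` (each earlier draw below `k` and
not the maximum of all `n` draws) and then accepting the overall maximum `a_r ≥ k`, equals
`k^(r-1)/(n-r+1) - k^n/(n-r+1)`; and the probability of winning at round `n` equals
`k^(n-1) - (n-1)·k^n/n`. -/
theorem identical_k_round_win_probs (n : ℕ) (hn : 2 ≤ n) (k : ℝ)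
    (hk : k ∈ Set.Icc (0 : ℝ) 1) :
    (∀ r : ℕ, ∀ _hr1 : 1 ≤ r, ∀ _hr2 : r ≤ n - 1,
      (Measure.pi fun _ : Fin n => (volume : Measure ℝ).restrict (Set.Icc 0 1))
        {a | (∀ j : Fin n, (j : ℕ) < r - 1 → a j < k ∧ ∃ i, a j < a i) ∧
          k ≤ a ⟨r - 1, by omega⟩ ∧ ∀ i, a i ≤ a ⟨r - 1, by omega⟩}
        = ENNReal.ofReal (k ^ (r - 1) / (n - r + 1) - k ^ n / (n - r + 1)))
    ∧ (Measure.pi fun _ : Fin n => (volume : Measure ℝ).restrict (Set.Icc 0 1))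
        {a | (∀ j : Fin n, (j : ℕ) < n - 1 → a j < k ∧ ∃ i, a j < a i) ∧
          ∀ i, a i ≤ a ⟨n - 1, by omega⟩}
        = ENNReal.ofReal (k ^ (n - 1) - (n - 1) * k ^ n / n) := by
  obtain ⟨hk0, hk1⟩ := hk
  obtain ⟨N, rfl⟩ : ∃ N, n = N + 1 := ⟨n - 1, by omega⟩
  refine ⟨fun r hr1 hr2 => ?_, ?_⟩
  · rw [← winAt_eq k ⟨r - 1, by omega⟩, measure_winAt hk0 hk1, ← sub_div]
    push_cast [Nat.cast_sub hr1]
    ring_nf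
  · simp only [Nat.add_sub_cancel]
    rw [show (⟨N, by omega⟩ : Fin (N + 1)) = Fin.last N from rfl, ← winAtLast_eq k N,
      measure_winAtLast hk0 hk1]
    push_cast
    ring_nf
end

section
/- For the n-draw game with decision numbers k_1 ≥ ... ≥ k_{n-1} ≥ k_n = 0, the win probability at round r satisfies PW(n,r) = PC(n,r-1)/(n-r+1) - k_r^n/n, where PC(n,r-1) is the probability the game continues past round r-1 (with PC(n,0)=1). -/
/-!
Draws are almost surely distinct, and their joint law is invariant under permutations of the
coordinates. The event that the game continues past the first `r - 1` rounds is invariant under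
permutations of the last `n - r + 1` coordinates and forces the overall maximum to lie among
them, so the maximum sits at each of these positions with the same probability: the event
"the game continues past round `r - 1` and `a_r` is the maximum" has probability
`PC(n, r-1) / (n - r + 1)`. This event splits into the win (`k_r ≤ a_r`) and the false negative
(`a_r < k_r`). For the latter, `a_j ≤ a_r < k_r ≤ k_j` for every `j < r` makes continuation
automatic up to ties, so it is the event "`a_r` is the maximum and `a_r < k_r`", whose
probability `k_r ^ n / n` comes from the same symmetry applied to the box `[0, k_r) ^ n`.
-/

open MeasureTheory ProbabilityTheory

section

variable {ι : Type*} [Fintype ι] {ν : Measure ℝ} [IsProbabilityMeasure ν]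

theorem pi_setOf_apply_eq_apply_eq_zero [NullSingletonClass ν] {i j : ι} (hij : i ≠ j) :
    Measure.pi (fun _ : ι => ν) {a | a i = a j} = 0 := by
  have hindep : IndepFun (fun a : ι → ℝ => a i) (fun a => a j) (Measure.pi fun _ => ν) :=
    (iIndepFun_pi (X := fun _ x => x) fun _ => aemeasurable_id).indepFun hij
  have hlaw := hindep.map_prod_eq_prod_map_map (measurable_pi_apply i).aemeasurable
    (measurable_pi_apply j).aemeasurable
  rw [(measurePreserving_eval _ i).map_eq, (measurePreserving_eval _ j).map_eq] at hlaw
  have hdiag : MeasurableSet {p : ℝ × ℝ | p.1 = p.2} :=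
    measurableSet_eq_fun measurable_fst measurable_snd
  have := Measure.map_apply (μ := Measure.pi fun _ : ι => ν)
    ((measurable_pi_apply i).prodMk (measurable_pi_apply j)) hdiag
  rw [hlaw, Measure.prod_apply hdiag] at this
  simpa [Set.preimage] using this.symm

theorem pi_preimage_comp_perm (σ : Equiv.Perm ι) (s : Set (ι → ℝ)) :
    Measure.pi (fun _ : ι => ν) ((· ∘ σ) ⁻¹' s) = Measure.pi (fun _ : ι => ν) s :=
  (measurePreserving_arrowCongr' (fun _ => ν) (fun _ => ν) σ.symm (MeasurableEquiv.refl ℝ)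
    fun _ => MeasurePreserving.id ν).measure_preimage_equiv s

end

section

variable {ι : Type*}

def maxAt (m : ι) : Set (ι → ℝ) := {a | ∀ i, a i ≤ a m}

theorem measurableSet_maxAt [Countable ι] (m : ι) : MeasurableSet (maxAt m) := by
  simp only [maxAt, Set.ofPred_forall]
  exact MeasurableSet.iInter fun i =>
    measurableSet_le (measurable_pi_apply i) (measurable_pi_apply m)

theorem preimage_comp_perm_maxAt (σ : Equiv.Perm ι) (m : ι) :
    (· ∘ σ) ⁻¹' maxAt m = maxAt (σ m) := by
  ext a
  simp only [maxAt, Set.mem_preimage, Set.mem_ofPred_eq, Function.comp_apply]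
  exact σ.forall_congr_right (q := fun i => a i ≤ a (σ m))

theorem maxAt_inter_maxAt_subset (m m' : ι) : maxAt m ∩ maxAt m' ⊆ {a | a m = a m'} :=
  fun _ ha => le_antisymm (ha.2 m) (ha.1 m')

variable [Fintype ι] {ν : Measure ℝ} [IsProbabilityMeasure ν] [NullSingletonClass ν]

theorem card_mul_pi_inter_maxAt [DecidableEq ι] {C : Set (ι → ℝ)} (hC : MeasurableSet C)
    {S : Finset ι} {p : ι} (hCS : C ⊆ ⋃ m ∈ S, maxAt m)
    (hswap : ∀ m ∈ S, (· ∘ Equiv.swap p m) ⁻¹' C = C) :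
    (S.card : ENNReal) * Measure.pi (fun _ : ι => ν) (C ∩ maxAt p)
      = Measure.pi (fun _ : ι => ν) C := by
  set μ := Measure.pi fun _ : ι => ν
  have hpiece : ∀ m ∈ S, μ (C ∩ maxAt m) = μ (C ∩ maxAt p) := fun m hm => by
    rw [← pi_preimage_comp_perm (Equiv.swap p m) (C ∩ maxAt p), Set.preimage_inter,
      hswap m hm, preimage_comp_perm_maxAt, Equiv.swap_apply_left]
  have hdisj : Set.Pairwise S (Function.onFun (AEDisjoint μ) fun m => C ∩ maxAt m) :=
    fun m _ m' _ hmm' => measure_mono_null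
      ((Set.inter_inter_inter_comm ..).trans_subset Set.inter_subset_right |>.trans
        (maxAt_inter_maxAt_subset m m')) (pi_setOf_apply_eq_apply_eq_zero hmm')
  calc (S.card : ENNReal) * μ (C ∩ maxAt p) = ∑ m ∈ S, μ (C ∩ maxAt m) := by
        rw [Finset.sum_congr rfl hpiece, Finset.sum_const, nsmul_eq_mul]
    _ = μ (⋃ m ∈ S, C ∩ maxAt m) := (measure_biUnion_finset₀ hdisj
        fun m _ => (hC.inter (measurableSet_maxAt m)).nullMeasurableSet).symm
    _ = μ C := by rw [← Set.inter_iUnion₂, Set.inter_eq_left.2 hCS]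

theorem card_mul_pi_maxAt_inter_lt [Nonempty ι] (p : ι) (c : ℝ) :
    (Fintype.card ι : ENNReal) * Measure.pi (fun _ : ι => ν) (maxAt p ∩ {a | a p < c})
      = ν (Set.Iio c) ^ Fintype.card ι := by
  classical
  set box : Set (ι → ℝ) := Set.univ.pi fun _ => Set.Iio c
  have hbox : box ∩ maxAt p = maxAt p ∩ {a | a p < c} := by
    ext a
    simp only [box, maxAt, Set.mem_inter_iff, Set.mem_univ_pi, Set.mem_Iio, Set.mem_ofPred_eq]
    exact ⟨fun h => ⟨h.2, h.1 p⟩, fun h => ⟨fun i => (h.1 i).trans_lt h.2, h.1⟩⟩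
  have hcover : box ⊆ ⋃ m ∈ Finset.univ, maxAt m := fun a _ => by
    obtain ⟨m, hm⟩ := Finite.exists_max a
    exact Set.mem_biUnion (Finset.mem_univ m) hm
  have hswap : ∀ m ∈ Finset.univ, (· ∘ Equiv.swap p m) ⁻¹' box = box := fun m _ => by
    ext a
    simp only [box, Set.mem_preimage, Set.mem_univ_pi, Function.comp_apply]
    exact (Equiv.swap p m).forall_congr_right (q := fun i => a i ∈ Set.Iio c)
  rw [← Finset.card_univ, ← hbox, card_mul_pi_inter_maxAt (MeasurableSet.univ_pi fun _ =>
    measurableSet_Iio) hcover hswap, Measure.pi_pi, Finset.prod_const]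

end

instance : IsProbabilityMeasure (volume.restrict (Set.Icc (0 : ℝ) 1)) :=
  ⟨by simp⟩

theorem volume_restrict_Icc_zero_one_Iio_s14 {c : ℝ} (hc : c ≤ 1) :
    volume.restrict (Set.Icc 0 1) (Set.Iio c) = ENNReal.ofReal c := by
  have hIco : Set.Iio c ∩ Set.Icc 0 1 = Set.Ico 0 c := by
    ext x
    simp only [Set.mem_inter_iff, Set.mem_Iio, Set.mem_Icc, Set.mem_Ico]
    grind
  rw [Measure.restrict_apply measurableSet_Iio, hIco, Real.volume_Ico, sub_zero]

theorem pi_volume_restrict_Icc_zero_one_maxAt_inter_lt {ι : Type*} [Fintype ι] (p : ι) {c : ℝ}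
    (hc0 : 0 ≤ c) (hc1 : c ≤ 1) :
    Measure.pi (fun _ : ι => volume.restrict (Set.Icc (0 : ℝ) 1)) (maxAt p ∩ {a | a p < c})
      = ENNReal.ofReal (c ^ Fintype.card ι / Fintype.card ι) := by
  have : Nonempty ι := ⟨p⟩
  rw [ENNReal.ofReal_div_of_pos (by simpa using Fintype.card_pos), ENNReal.ofReal_pow hc0,
    ENNReal.ofReal_natCast, ENNReal.eq_div_iff (by simp) (ENNReal.natCast_ne_top _),
    card_mul_pi_maxAt_inter_lt, volume_restrict_Icc_zero_one_Iio_s14 hc1]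

section

variable {n : ℕ} {ν : Measure ℝ} [IsProbabilityMeasure ν] [NullSingletonClass ν]

/-- Coordinate `j : Fin n` is round `j + 1`, so this is the event that the game continues past
rounds `1, …, q`. -/
def continuesPast (k : Fin n → ℝ) (q : ℕ) : Set (Fin n → ℝ) :=
  {a | ∀ j : Fin n, (j : ℕ) < q → a j < k j ∧ ∃ i, j < i ∧ a j < a i}

theorem measurableSet_continuesPast (k : Fin n → ℝ) (q : ℕ) :
    MeasurableSet (continuesPast k q) := by
  simp only [continuesPast, Set.ofPred_forall, Set.ofPred_and, Set.ofPred_exists]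
  exact MeasurableSet.iInter fun j => MeasurableSet.iInter fun _ =>
    (measurableSet_lt (measurable_pi_apply j) measurable_const).inter <|
      MeasurableSet.iUnion fun i => (MeasurableSet.const _).inter <|
        measurableSet_lt (measurable_pi_apply j) (measurable_pi_apply i)

theorem continuesPast_subset_biUnion_maxAt (k : Fin n → ℝ) (p : Fin n) :
    continuesPast k p ⊆ ⋃ m ∈ Finset.Ici p, maxAt m := by
  intro a ha
  have : Nonempty (Fin n) := ⟨p⟩
  obtain ⟨m, hm⟩ := Finite.exists_max a
  refine Set.mem_biUnion (Finset.mem_Ici.2 (not_lt.1 fun hmp => ?_)) hm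
  obtain ⟨-, i, -, hi⟩ := ha m hmp
  exact (hm i).not_gt hi

theorem preimage_comp_swap_continuesPast (k : Fin n → ℝ) {p m m' : Fin n} (hm : p ≤ m)
    (hm' : p ≤ m') :
    (· ∘ Equiv.swap m m') ⁻¹' continuesPast k p = continuesPast k p := by
  have hfix : ∀ j : Fin n, (j : ℕ) < p → Equiv.swap m m' j = j := fun j hj =>
    Equiv.swap_apply_of_ne_of_ne (Fin.ne_of_lt (Fin.lt_of_lt_of_le hj hm))
      (Fin.ne_of_lt (Fin.lt_of_lt_of_le hj hm'))
  have hlt : ∀ j : Fin n, (j : ℕ) < p → ∀ i, j < i → j < Equiv.swap m m' i := by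
    intro j hj i hji
    rcases eq_or_ne i m with rfl | him
    · rw [Equiv.swap_apply_left]; exact Fin.lt_of_lt_of_le hj hm'
    rcases eq_or_ne i m' with rfl | him'
    · rw [Equiv.swap_apply_right]; exact Fin.lt_of_lt_of_le hj hm
    · rwa [Equiv.swap_apply_of_ne_of_ne him him']
  have hmaps : ∀ a ∈ continuesPast k p, a ∘ Equiv.swap m m' ∈ continuesPast k p :=
    fun a ha j hj => by
      obtain ⟨hkj, i, hji, hi⟩ := ha j hj
      simp only [Function.comp_apply, hfix j hj]
      exact ⟨hkj, Equiv.swap m m' i, hlt j hj i hji, by rwa [Equiv.swap_apply_self]⟩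
  ext a
  refine ⟨fun h => ?_, hmaps a⟩
  simpa [Function.comp_def] using hmaps _ h

theorem maxAt_inter_lt_sdiff_continuesPast_subset {k : Fin n → ℝ} {p : Fin n}
    (hk : ∀ j ≤ p, k p ≤ k j) :
    (maxAt p ∩ {a | a p < k p}) \ continuesPast k p ⊆ ⋃ j, ⋃ (_ : j ≠ p), {a | a j = a p} := by
  rintro a ⟨⟨hmax, hlt⟩, hstop⟩
  simp only [continuesPast, Set.mem_ofPred_eq, not_forall] at hstop
  obtain ⟨j, hjp, hj⟩ := hstop
  have hjp' : j < p := hjp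
  refine Set.mem_biUnion hjp'.ne (eq_of_le_of_not_lt (hmax j) fun hj' => hj ?_)
  exact ⟨(hmax j).trans_lt (hlt.trans_le (hk j hjp'.le)), p, hjp', hj'⟩

theorem card_mul_pi_continuesPast_inter_maxAt (k : Fin n → ℝ) (p : Fin n) :
    ((n - p : ℕ) : ENNReal) * Measure.pi (fun _ => ν) (continuesPast k p ∩ maxAt p)
      = Measure.pi (fun _ => ν) (continuesPast k p) := by
  rw [← Fin.card_Ici]
  exact card_mul_pi_inter_maxAt (measurableSet_continuesPast k p)
    (continuesPast_subset_biUnion_maxAt k p) fun m hm =>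
      preimage_comp_swap_continuesPast k le_rfl (Finset.mem_Ici.1 hm)

theorem pi_maxAt_inter_lt_inter_continuesPast {k : Fin n → ℝ} {p : Fin n}
    (hk : ∀ j ≤ p, k p ≤ k j) :
    Measure.pi (fun _ => ν) ((maxAt p ∩ {a | a p < k p}) ∩ continuesPast k p)
      = Measure.pi (fun _ => ν) (maxAt p ∩ {a | a p < k p}) :=
  measure_inter_conull' <| measure_mono_null (maxAt_inter_lt_sdiff_continuesPast_subset hk) <|
    measure_iUnion_null fun _ => measure_iUnion_null fun hjp => pi_setOf_apply_eq_apply_eq_zero hjp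

end

/-- For the `n`-draw game with nonincreasing decision numbers `1 ≥ k₁ ≥ … ≥ k_n = 0`, the
win probability at round `r` equals `PC(n,r-1)/(n-r+1) - k_r^n/n`, where `PC(n,r-1)` is the
probability that the game continues past round `r-1` (each earlier draw was below its
decision number and below the maximum of the remaining draws), with `PC(n,0) = 1`. -/
theorem win_prob_eq_continuation_div (n : ℕ) (k : Fin n → ℝ)
    (hk0 : ∀ j, 0 ≤ k j) (hk1 : ∀ j, k j ≤ 1) (hmono : ∀ i j : Fin n, i ≤ j → k j ≤ k i)
    (r : ℕ) (hr1 : 1 ≤ r) (hr2 : r ≤ n) :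
    (Measure.pi fun _ : Fin n => (volume : Measure ℝ).restrict (Set.Icc 0 1))
      {a | (∀ j : Fin n, (j : ℕ) < r - 1 → a j < k j ∧ ∃ i, j < i ∧ a j < a i) ∧
        k ⟨r - 1, by omega⟩ ≤ a ⟨r - 1, by omega⟩ ∧ ∀ i, a i ≤ a ⟨r - 1, by omega⟩}
      = (Measure.pi fun _ : Fin n => (volume : Measure ℝ).restrict (Set.Icc 0 1))
          {a | ∀ j : Fin n, (j : ℕ) < r - 1 → a j < k j ∧ ∃ i, j < i ∧ a j < a i}
          / ((n - r + 1 : ℕ) : ENNReal)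
        - ENNReal.ofReal (k ⟨r - 1, by omega⟩ ^ n / n) := by
  set p : Fin n := ⟨r - 1, by omega⟩
  set μ := Measure.pi fun _ : Fin n => (volume : Measure ℝ).restrict (Set.Icc 0 1)
  set C := continuesPast k p
  set F := (maxAt p ∩ {a | a p < k p}) ∩ continuesPast k p
  have hwin : {a | (∀ j : Fin n, (j : ℕ) < r - 1 → a j < k j ∧ ∃ i, j < i ∧ a j < a i) ∧
      k p ≤ a p ∧ ∀ i, a i ≤ a p} = (C ∩ maxAt p) \ F := by
    ext a
    constructor
    · rintro ⟨hC, hkp, hM⟩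
      exact ⟨⟨hC, hM⟩, fun hF => hF.1.2.not_ge hkp⟩
    · rintro ⟨⟨hC, hM⟩, hF⟩
      exact ⟨hC, not_lt.1 fun hlt => hF ⟨⟨hM, hlt⟩, hC⟩, hM⟩
  have hF : F ⊆ C ∩ maxAt p := fun a ha => ⟨ha.2, ha.1.1⟩
  have hFmeas : MeasurableSet F := ((measurableSet_maxAt p).inter
    (measurableSet_lt (measurable_pi_apply p) measurable_const)).inter
      (measurableSet_continuesPast k p)
  have hcard : ((n - r + 1 : ℕ) : ENNReal) * μ (C ∩ maxAt p) = μ C := by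
    rw [show n - r + 1 = n - p by simp only [p]; omega]
    exact card_mul_pi_continuesPast_inter_maxAt k p
  have hfalse : μ F = ENNReal.ofReal (k p ^ n / n) := by
    rw [pi_maxAt_inter_lt_inter_continuesPast fun j hj => hmono j p hj,
      pi_volume_restrict_Icc_zero_one_maxAt_inter_lt p (hk0 p) (hk1 p), Fintype.card_fin]
  show μ _ = μ C / _ - _
  rw [hwin, measure_sdiff hF hFmeas.nullMeasurableSet (measure_ne_top μ F), hfalse,
    ← ENNReal.eq_div_iff (by simp) (ENNReal.natCast_ne_top _) |>.2 hcard]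
end

section
/- Conditional on the event that a_1 < k and a_1 is not the maximum of (a_1, a_2, a_3), where a_1, a_2, a_3 are i.i.d. uniform on [0,1] and k ∈ (0,1], the expected value of max(a_2, a_3) is strictly greater than 2/3 (the unconditional expected maximum of two uniform draws). -/
/-!
Integrate out `a₁` first: given `M = max a₂ a₃`, the event has conditional probability
`min k M`. The law of `M` has density `2m` on `[0,1]`: for continuous `φ`, the inner integral of
`φ (max x y)` splits at `y = x` into `x φ x + ∫ₓ¹ φ`, and integrating by parts turns the second
term into a second copy of `∫₀¹ m φ m`. Hence the event has probability
`∫₀¹ 2m min(k,m) dm = k - k³/3`, the integral of `M` over it is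
`∫₀¹ 2m² min(k,m) dm = 2/3 (k - k⁴/4)`, and the claim reduces to `k < 4/3`.
-/

open MeasureTheory Set intervalIntegral

theorem integral_pi_fin_succ {α E : Type*} [MeasurableSpace α] [NormedAddCommGroup E]
    [NormedSpace ℝ E] {n : ℕ} (μ : Measure α) [SigmaFinite μ] {F : (Fin (n + 1) → α) → E}
    (hF : Integrable F (Measure.pi fun _ => μ)) :
    ∫ a, F a ∂Measure.pi (fun _ => μ) = ∫ b, ∫ t, F (Fin.cons t b) ∂μ ∂Measure.pi (fun _ => μ) := by
  have he := (measurePreserving_piFinSuccAbove (fun _ : Fin (n + 1) => μ) 0).symm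
  rw [← he.integral_comp', integral_prod_symm]
  · simp only [MeasurableEquiv.piFinSuccAbove_symm_apply, Fin.insertNthEquiv_zero]; rfl
  · exact (he.integrable_comp_emb (MeasurableEquiv.measurableEmbedding _)).2 hF

theorem integral_pi_fin_two {α E : Type*} [MeasurableSpace α] [NormedAddCommGroup E]
    [NormedSpace ℝ E] (μ : Measure α) [SigmaFinite μ] {F : (Fin 2 → α) → E}
    (hF : Integrable F (Measure.pi fun _ => μ)) :
    ∫ a, F a ∂Measure.pi (fun _ => μ) = ∫ x, ∫ y, F ![x, y] ∂μ ∂μ := by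
  have he := (measurePreserving_finTwoArrow μ).symm
  rw [← he.integral_comp', integral_prod]
  · rfl
  · exact (he.integrable_comp_emb (MeasurableEquiv.measurableEmbedding _)).2 hF

theorem integral_restrict_Icc {E : Type*} [NormedAddCommGroup E] [NormedSpace ℝ E] {f : ℝ → E}
    {a b : ℝ} (hab : a ≤ b) :
    ∫ x, f x ∂volume.restrict (Icc a b) = ∫ x in a..b, f x := by
  rw [integral_of_le hab, integral_Icc_eq_integral_Ioc]

theorem measureReal_restrict_Icc_Iio {a b c : ℝ} (hac : a ≤ c) (hcb : c ≤ b) :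
    (volume.restrict (Icc a b)).real (Iio c) = c - a := by
  have : Iio c ∩ Icc a b = Ico a c := by
    ext x
    simp only [mem_inter_iff, mem_Iio, mem_Icc, mem_Ico]
    grind
  rw [measureReal_restrict_apply measurableSet_Iio, this, Real.volume_real_Ico_of_le hac]

theorem Continuous.integrable_pi_restrict_Icc {ι E : Type*} [Fintype ι] [NormedAddCommGroup E]
    {f : (ι → ℝ) → E} (hf : Continuous f) (a b : ℝ) :
    Integrable f (Measure.pi fun _ : ι => volume.restrict (Icc a b)) := by
  rw [← Measure.restrict_pi_pi]
  exact hf.continuousOn.integrableOn_compact (isCompact_univ_pi fun _ => isCompact_Icc)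

theorem ae_pi_restrict_Icc_mem {ι : Type*} [Fintype ι] {a b : ℝ} :
    ∀ᵐ x ∂Measure.pi (fun _ : ι => volume.restrict (Icc a b)), ∀ i, x i ∈ Icc a b :=
  ae_all_iff.2 fun _ => Measure.tendsto_eval_ae_ae.eventually (ae_restrict_mem measurableSet_Icc)

theorem integral_comp_max_left {φ : ℝ → ℝ} (hφ : Continuous φ) {a b x : ℝ} (hax : a ≤ x)
    (hxb : x ≤ b) : ∫ y in a..b, φ (max x y) = (x - a) * φ x + ∫ y in x..b, φ y := by
  have hint : ∀ c d, IntervalIntegrable (fun y => φ (max x y)) volume c d := fun _ _ =>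
    (hφ.comp (continuous_const.max continuous_id)).intervalIntegrable _ _
  rw [← integral_add_adjacent_intervals (hint a x) (hint x b)]
  congr 1
  · rw [integral_congr (g := fun _ => φ x) fun y hy => by
      rw [uIcc_of_le hax] at hy; simp [max_eq_left hy.2]]
    simp
  · exact integral_congr fun y hy => by rw [uIcc_of_le hxb] at hy; simp [max_eq_right hy.1]

theorem integral_integral_comp_max {φ : ℝ → ℝ} (hφ : Continuous φ) {a b : ℝ} (hab : a ≤ b) :
    ∫ x in a..b, ∫ y in a..b, φ (max x y) = ∫ m in a..b, 2 * (m - a) * φ m := by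
  set Φ : ℝ → ℝ := fun x => ∫ y in x..b, φ y
  have hΦ : ∀ x, HasDerivAt Φ (-φ x) x := fun x =>
    integral_hasDerivAt_left (hφ.intervalIntegrable _ _) (hφ.stronglyMeasurableAtFilter _ _)
      hφ.continuousAt
  have hparts : ∫ x in a..b, Φ x = ∫ x in a..b, (x - a) * φ x := by
    have := integral_mul_deriv_eq_deriv_mul (a := a) (b := b) (u := Φ) (v := fun x => x - a)
      (v' := fun _ => 1) (fun x _ => hΦ x) (fun x _ => (hasDerivAt_id x).sub_const a)
      (hφ.neg.intervalIntegrable _ _) intervalIntegrable_const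
    simp only [mul_one, Φ, integral_same, sub_self, mul_zero, zero_mul, zero_sub] at this
    rw [this, ← intervalIntegral.integral_neg]
    congr 1 with x
    ring
  have hcont : Continuous fun x => (x - a) * φ x := (continuous_id.sub continuous_const).mul hφ
  calc ∫ x in a..b, ∫ y in a..b, φ (max x y)
      = ∫ x in a..b, ((x - a) * φ x + Φ x) :=
        integral_congr fun x hx => by
          rw [uIcc_of_le hab] at hx; exact integral_comp_max_left hφ hx.1 hx.2
    _ = (∫ x in a..b, (x - a) * φ x) + ∫ x in a..b, Φ x :=
        integral_add (hcont.intervalIntegrable _ _)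
          ((continuous_iff_continuousAt.2 fun x => (hΦ x).continuousAt).intervalIntegrable _ _)
    _ = ∫ m in a..b, 2 * (m - a) * φ m := by
        rw [hparts, ← integral_add (hcont.intervalIntegrable _ _) (hcont.intervalIntegrable _ _)]
        congr 1 with m
        ring

theorem integral_pi_fin_two_comp_max {φ : ℝ → ℝ} (hφ : Continuous φ) {a b : ℝ} (hab : a ≤ b) :
    ∫ x, φ (max (x 0) (x 1)) ∂Measure.pi (fun _ : Fin 2 => volume.restrict (Icc a b))
      = ∫ m in a..b, 2 * (m - a) * φ m := by
  have hcont : Continuous fun x : Fin 2 → ℝ => φ (max (x 0) (x 1)) := by fun_prop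
  rw [integral_pi_fin_two _ (hcont.integrable_pi_restrict_Icc a b)]
  simp only [Matrix.cons_val_zero, Matrix.cons_val_one, integral_restrict_Icc hab]
  exact integral_integral_comp_max hφ hab

theorem integral_mul_min {h : ℝ → ℝ} (hh : Continuous h) {a b k : ℝ} (hak : a ≤ k)
    (hkb : k ≤ b) :
    ∫ m in a..b, h m * min k m = (∫ m in a..k, h m * m) + k * ∫ m in k..b, h m := by
  have hint : ∀ c d, IntervalIntegrable (fun m => h m * min k m) volume c d := fun _ _ =>
    (hh.mul (continuous_const.min continuous_id)).intervalIntegrable _ _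
  rw [← integral_add_adjacent_intervals (hint a k) (hint k b),
    ← intervalIntegral.integral_const_mul]
  congr 1
  · exact integral_congr fun m hm => by rw [uIcc_of_le hak] at hm; simp [min_eq_right hm.2]
  · exact integral_congr fun m hm => by
      rw [uIcc_of_le hkb] at hm; simp [min_eq_left hm.1, mul_comm]

theorem setIntegral_comp_max_over_first_lt {g : ℝ → ℝ} (hg : Continuous g) {k : ℝ}
    (hk : 0 ≤ k) :
    ∫ a in {a : Fin 3 → ℝ | a 0 < k ∧ a 0 < max (a 1) (a 2)}, g (max (a 1) (a 2))
        ∂Measure.pi (fun _ => volume.restrict (Icc 0 1))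
      = ∫ m in (0 : ℝ)..1, 2 * m * g m * min k m := by
  set E := {a : Fin 3 → ℝ | a 0 < k ∧ a 0 < max (a 1) (a 2)}
  set μ := volume.restrict (Icc (0 : ℝ) 1)
  have hE : MeasurableSet E :=
    (measurableSet_lt (measurable_pi_apply 0) measurable_const).inter
      (measurableSet_lt (measurable_pi_apply 0) (by fun_prop))
  have hint : Integrable (E.indicator fun a => g (max (a 1) (a 2))) (Measure.pi fun _ => μ) :=
    ((by fun_prop : Continuous fun a : Fin 3 → ℝ => g (max (a 1) (a 2))).integrable_pi_restrict_Icc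
      0 1).indicator hE
  have hsection : ∀ (b : Fin 2 → ℝ) t, E.indicator (fun a => g (max (a 1) (a 2))) (Fin.cons t b)
      = (Iio (min k (max (b 0) (b 1)))).indicator (fun _ => g (max (b 0) (b 1))) t := by
    intro b t
    have hb1 : (Fin.cons t b : Fin 3 → ℝ) 2 = b 1 := rfl
    simp [E, Set.indicator_apply, hb1]
  rw [← MeasureTheory.integral_indicator hE, integral_pi_fin_succ _ hint]
  calc _ = ∫ b : Fin 2 → ℝ, min k (max (b 0) (b 1)) * g (max (b 0) (b 1))
          ∂Measure.pi fun _ => μ := by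
        refine integral_congr_ae ?_
        filter_upwards [ae_pi_restrict_Icc_mem] with b hb
        simp only [hsection]
        rw [integral_indicator_const _ measurableSet_Iio, measureReal_restrict_Icc_Iio, sub_zero,
          smul_eq_mul]
        · exact le_min hk ((hb 0).1.trans (le_max_left _ _))
        · exact (min_le_right _ _).trans (max_le (hb 0).2 (hb 1).2)
    _ = ∫ m in (0 : ℝ)..1, 2 * (m - 0) * (min k m * g m) :=
        integral_pi_fin_two_comp_max (φ := fun m => min k m * g m) (by fun_prop) zero_le_one
    _ = ∫ m in (0 : ℝ)..1, 2 * m * g m * min k m := by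
        congr 1 with m
        ring

theorem measureReal_first_lt_min_max {k : ℝ} (hk0 : 0 ≤ k) (hk1 : k ≤ 1) :
    (Measure.pi fun _ : Fin 3 => volume.restrict (Icc (0 : ℝ) 1)).real
      {a | a 0 < k ∧ a 0 < max (a 1) (a 2)} = k - k ^ 3 / 3 := by
  have h := setIntegral_comp_max_over_first_lt (g := fun _ => 1) continuous_const hk0
  rw [setIntegral_const, smul_eq_mul, mul_one, integral_mul_min (by fun_prop) hk0 hk1] at h
  rw [h]
  ring_nf
  simp only [intervalIntegral.integral_mul_const, integral_pow, integral_id]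
  ring

theorem setIntegral_max_over_first_lt {k : ℝ} (hk0 : 0 ≤ k) (hk1 : k ≤ 1) :
    ∫ a in {a : Fin 3 → ℝ | a 0 < k ∧ a 0 < max (a 1) (a 2)}, max (a 1) (a 2)
        ∂Measure.pi (fun _ => volume.restrict (Icc 0 1)) = 2 / 3 * (k - k ^ 4 / 4) := by
  rw [setIntegral_comp_max_over_first_lt (g := fun m => m) continuous_id hk0,
    integral_mul_min (by fun_prop) hk0 hk1]
  ring_nf
  simp only [intervalIntegral.integral_mul_const, integral_pow]
  ring

/-- Conditional on the event `{a₁ < k and a₁ < max(a₂,a₃)}` (three i.i.d. uniform draws on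
`[0,1]`, `k ∈ (0,1]`), the expected value of `max(a₂,a₃)` is strictly greater than `2/3`,
the unconditional expected maximum of two uniform draws: the integral of `max(a₂,a₃)` over
the event exceeds `2/3` times the probability of the event. -/
theorem conditional_expected_max_gt (k : ℝ) (hk0 : 0 < k) (hk1 : k ≤ 1) :
    (2 / 3 : ℝ) *
      ((Measure.pi fun _ : Fin 3 => (volume : Measure ℝ).restrict (Set.Icc 0 1))
        {a | a 0 < k ∧ a 0 < max (a 1) (a 2)}).toReal
    < ∫ a in {a : Fin 3 → ℝ | a 0 < k ∧ a 0 < max (a 1) (a 2)}, max (a 1) (a 2)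
        ∂(Measure.pi fun _ : Fin 3 => (volume : Measure ℝ).restrict (Set.Icc 0 1)) := by
  rw [← measureReal_def, measureReal_first_lt_min_max hk0.le hk1,
    setIntegral_max_over_first_lt hk0.le hk1]
  nlinarith [pow_pos hk0 3]
end
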